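/- Let G be a connected graph containing two distinct cycles and satisfying cat(G) = 3. Then G has exactly 6 vertices and is isomorphic to two disjoint triangles joined by a single bridge edge. -/

import Mathlib

/-!
If `catNum G = 3`, then against a cat on any vertex the herder has a first cut after which,
wherever the cat moves, one further cut turns its component into a star centred at the cat. A
cycle through such a vertex is a triangle whose two other vertices have degree two. As some cycle
survives any single cut (there are two distinct cycles), each vertex of a cycle lies in a triangle
attached to the rest of `G` by a single bridge. Cutting an edge inside one such pendant triangle
leaves a cycle away from it, which yields a second, disjoint pendant triangle. If the second
bridge did not end in the first triangle, a cat starting at the outer end of the first bridge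
could always run to a non-attachment vertex of an intact pendant triangle and survive. So the two
bridges coincide and `G` consists of the two triangles.
-/

open SimpleGraph

universe u

/-- The cat can move from `u` to `w` in `G`: there is a nontrivial path,
equivalently `w ≠ u` and `w` is reachable from `u`. -/
def CatMove {V : Type u} (G : SimpleGraph V) (u w : V) : Prop :=
  u ≠ w ∧ G.Reachable u w

/-- `CapturedIn G v n` : with the cat on `v` and the herder to cut next,
the herder can guarantee that the cat is isolated after at most `n` edge deletions. -/
inductive CapturedIn {V : Type u} : SimpleGraph V → V → ℕ → Prop
  | isolated {G : SimpleGraph V} {v : V} {n : ℕ} (h : ∀ w, ¬ G.Adj v w) :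
      CapturedIn G v n
  | cut {G : SimpleGraph V} {v : V} {n : ℕ} (e : Sym2 V) (he : e ∈ G.edgeSet)
      (h : ∀ w, CatMove (G.deleteEdges {e}) v w → CapturedIn (G.deleteEdges {e}) w n) :
      CapturedIn G v (n + 1)

/-- The cat number of `G` with the cat starting at `v` (the game value; `⊤` if
the herder cannot guarantee capture within any fixed number of cuts). -/
noncomputable def catVNum {V : Type u} (G : SimpleGraph V) (v : V) : ℕ∞ :=
  sInf (Nat.cast '' {m : ℕ | CapturedIn G v m})

/-- The cat number of `G`: the cat picks the best starting vertex. -/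
noncomputable def catNum {V : Type u} (G : SimpleGraph V) : ℕ∞ :=
  ⨆ v, catVNum G v

/-- The cat, starting at `v`, can evade capture forever: there is a set of safe
positions (remaining graph, cat location), closed under responding to any cut. -/
def CatWinFrom {V : Type u} (G : SimpleGraph V) (v : V) : Prop :=
  ∃ S : Set (SimpleGraph V × V), (G, v) ∈ S ∧
    ∀ p ∈ S, (∃ w, p.1.Adj p.2 w) ∧
      ∀ e ∈ p.1.edgeSet, ∃ w, CatMove (p.1.deleteEdges {e}) p.2 w ∧
        (p.1.deleteEdges {e}, w) ∈ S

/-- `G` is cat-win if the cat can evade capture forever from some starting vertex. -/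
def CatWin {V : Type u} (G : SimpleGraph V) : Prop :=
  ∃ v, CatWinFrom G v

/-- `Evades G v n` : the cat on `v` has a strategy giving a valid response to each
of the next `n` cuts. -/
inductive Evades {V : Type u} : SimpleGraph V → V → ℕ → Prop
  | zero {G : SimpleGraph V} {v : V} : Evades G v 0
  | succ {G : SimpleGraph V} {v : V} {n : ℕ} (move : Sym2 V → V)
      (hmove : ∀ e ∈ G.edgeSet, CatMove (G.deleteEdges {e}) v (move e))
      (h : ∀ e ∈ G.edgeSet, Evades (G.deleteEdges {e}) (move e) n) :
      Evades G v (n + 1)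

/-- `G` is `k`-evadible for every `k`: for each `n` the cat can respond to the
first `n` cuts from a suitable starting vertex. -/
def OmegaEvadible {V : Type u} (G : SimpleGraph V) : Prop :=
  ∀ n : ℕ, ∃ v, Evades G v n

/-- The infinite complete binary tree on binary strings. -/
def binTree : SimpleGraph (List Bool) :=
  SimpleGraph.fromRel (fun a b => ∃ t : Bool, b = a ++ [t])

/-- `H` is a minor of `G` : disjoint connected branch sets, one per vertex of `H`,
with an edge of `G` between branch sets for every edge of `H`. -/
def IsMinor {W : Type*} {V : Type u} (H : SimpleGraph W) (G : SimpleGraph V) : Prop :=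
  ∃ B : W → Set V,
    (∀ w, (G.induce (B w)).Connected) ∧
    (Pairwise fun w₁ w₂ => Disjoint (B w₁) (B w₂)) ∧
    (∀ w₁ w₂, H.Adj w₁ w₂ → ∃ x ∈ B w₁, ∃ y ∈ B w₂, G.Adj x y)

/-- Every pair of distinct vertices is joined by two edge-disjoint (finite) paths. -/
def TwoEdgeConnected {V : Type u} (G : SimpleGraph V) : Prop :=
  ∀ u v : V, u ≠ v → ∃ (p q : G.Walk u v), p.IsPath ∧ q.IsPath ∧
    ∀ e ∈ p.edges, e ∉ q.edges

/-- `x` has degree exactly 1 in `G`. -/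
def DegOne {V : Type u} (G : SimpleGraph V) (x : V) : Prop :=
  ∃ a, G.neighborSet x = {a}

/-- `x` has degree exactly 2 in `G`. -/
def DegTwo {V : Type u} (G : SimpleGraph V) (x : V) : Prop :=
  ∃ a b, a ≠ b ∧ G.neighborSet x = {a, b}

/-- `x` has degree exactly 3 in `G`. -/
def DegThree {V : Type u} (G : SimpleGraph V) (x : V) : Prop :=
  ∃ a b c, a ≠ b ∧ a ≠ c ∧ b ≠ c ∧ G.neighborSet x = {a, b, c}

/-- `x` has degree at least `k` in `G`. -/
def DegGe {V : Type u} (G : SimpleGraph V) (x : V) (k : ℕ) : Prop :=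
  ∃ s : Finset V, s.card = k ∧ ∀ a ∈ s, G.Adj x a

/-- Two disjoint triangles joined by a bridge. -/
def twoTrianglesBridge : SimpleGraph (Fin 6) :=
  SimpleGraph.fromEdgeSet {s(0,1), s(1,2), s(0,2), s(3,4), s(4,5), s(3,5), s(2,3)}


variable {V : Type u}

theorem CapturedIn.mono {G : SimpleGraph V} {v : V} {m n : ℕ} (h : CapturedIn G v m)
    (hmn : m ≤ n) : CapturedIn G v n := by
  induction h generalizing n with
  | isolated h => exact .isolated h
  | cut e he _ ih =>
    obtain ⟨n, rfl⟩ := Nat.exists_eq_add_of_lt hmn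
    exact .cut e he fun w hw => ih w hw (by omega)

theorem CapturedIn.of_catNum_le {G : SimpleGraph V} {n : ℕ} (h : catNum G ≤ n) (v : V) :
    CapturedIn G v n := by
  by_contra hv
  have hlt : ((n + 1 : ℕ) : ℕ∞) ≤ catVNum G v := le_sInf <| by
    rintro _ ⟨m, hm, rfl⟩
    exact Nat.cast_le.2 (Nat.lt_of_not_le fun hmn => hv (hm.mono hmn))
  have := (hlt.trans (le_iSup (catVNum G) v)).trans h
  norm_cast at this
  omega

theorem CapturedIn.not_adj_of_zero {H : SimpleGraph V} {v x : V} (h : CapturedIn H v 0) :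
    ¬ H.Adj v x := by
  cases h with
  | isolated h => exact h x

theorem CapturedIn.neighborSet_subsingleton {H : SimpleGraph V} {w : V} (h : CapturedIn H w 1) :
    (H.neighborSet w).Subsingleton := by
  cases h with
  | isolated h => exact fun a ha => absurd ha (h a)
  | cut e _ hstep =>
    have hcut : ∀ a, H.Adj w a → s(w, a) = e := fun a ha => by
      by_contra hne
      have hadj : (H.deleteEdges {e}).Adj w a := deleteEdges_adj.2 ⟨ha, hne⟩
      exact (hstep a ⟨hadj.ne, hadj.reachable⟩).not_adj_of_zero hadj.symm
    exact fun a ha b hb => Sym2.congr_right.1 ((hcut a ha).trans (hcut b hb).symm)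

/-- What `CapturedIn H w 2` provides when `w` is not isolated: a cut after which every vertex
the cat can move to has at most one neighbour. -/
def CutsToStar (H : SimpleGraph V) (w : V) : Prop :=
  ∃ f ∈ H.edgeSet, ∀ x, x ≠ w → (H.deleteEdges {f}).Reachable w x →
    ((H.deleteEdges {f}).neighborSet x).Subsingleton

theorem CapturedIn.cutsToStar {H : SimpleGraph V} {w a : V} (h : CapturedIn H w 2)
    (ha : H.Adj w a) : CutsToStar H w := by
  cases h with
  | isolated h => exact absurd ha (h a)
  | cut e he hstep =>
    exact ⟨e, he, fun x hxw hx => (hstep x ⟨hxw.symm, hx⟩).neighborSet_subsingleton⟩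

theorem CapturedIn.exists_cutsToStar {G : SimpleGraph V} {v a : V} (h : CapturedIn G v 3)
    (ha : G.Adj v a) : ∃ e ∈ G.edgeSet, ∀ w, w ≠ v → (G.deleteEdges {e}).Reachable v w →
      CutsToStar (G.deleteEdges {e}) w := by
  cases h with
  | isolated h => exact absurd ha (h a)
  | cut e he hstep =>
    refine ⟨e, he, fun w hwv hw => ?_⟩
    obtain ⟨p⟩ := hw
    exact (hstep w ⟨hwv.symm, p.reachable⟩).cutsToStar
      (p.adj_penultimate (Walk.not_nil_of_ne hwv.symm)).symm

namespace SimpleGraph.Walk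

variable {G : SimpleGraph V}

theorem IsCycle.exists_ne_mem_edges {x w : V} {c : G.Walk x x} (hc : c.IsCycle)
    (hw : w ∈ c.support) : ∃ a b, a ≠ b ∧ s(w, a) ∈ c.edges ∧ s(w, b) ∈ c.edges := by
  classical
  have hc' := hc.rotate hw
  have hmem {f} := (c.rotate_edges w hw).mem_iff (a := f)
  refine ⟨_, _, hc'.snd_ne_penultimate, hmem.1 (mk_start_snd_mem_edges hc'.not_nil), ?_⟩
  rw [Sym2.eq_swap]
  exact hmem.1 (mk_penultimate_end_mem_edges hc'.not_nil)

theorem IsCycle.exists_isPath_of_snd_eq {α β : V} {d : G.Walk α α} (hd : d.IsCycle)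
    (hβ : d.snd = β) : ∃ q : G.Walk β α, q.IsPath ∧ s(α, β) ∉ q.edges ∧
      ∀ f, f ∈ d.edges ↔ f = s(α, β) ∨ f ∈ q.edges := by
  subst hβ
  have hd' := d.cons_tail_eq hd.not_nil
  rw [← hd', cons_isCycle_iff] at hd
  refine ⟨d.tail, hd.1, hd.2, fun f => ?_⟩
  conv_lhs => rw [← hd']
  simp

theorem IsCycle.exists_isPath_of_mem_edges {x α β : V} {c : G.Walk x x} (hc : c.IsCycle)
    (he : s(α, β) ∈ c.edges) : ∃ q : G.Walk β α, q.IsPath ∧ s(α, β) ∉ q.edges ∧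
      ∀ f, f ∈ c.edges ↔ f = s(α, β) ∨ f ∈ q.edges := by
  classical
  have hα := c.fst_mem_support_of_mem_edges he
  have hmem {f} := (c.rotate_edges α hα).mem_iff (a := f)
  set d := c.rotate α hα
  have hd : d.IsCycle := hc.rotate hα
  suffices h : d.snd = β ∨ d.penultimate = β by
    rcases h with h | h
    · simpa only [hmem] using hd.exists_isPath_of_snd_eq h
    · simpa only [edges_reverse, List.mem_reverse, hmem] using
        hd.reverse.exists_isPath_of_snd_eq ((snd_reverse d).trans h)
  have hd' := d.cons_tail_eq hd.not_nil
  have he' : s(α, β) ∈ d.edges := hmem.2 he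
  rw [← hd', edges_cons, List.mem_cons] at he'
  rcases he' with h | h
  · exact .inl (Sym2.congr_right.1 h).symm
  · have hne : ¬ d.tail.Nil := fun hn => by simp [edges_eq_nil.2 hn] at h
    right
    rw [← hd', penultimate_cons_of_not_nil _ _ hne]
    exact (hd.isPath_tail.eq_penultimate_of_mem_edges h).symm

end SimpleGraph.Walk

namespace SimpleGraph

variable {G : SimpleGraph V}

theorem exists_isCycle_deleteEdges {c₁ c₂ : V} {p₁ : G.Walk c₁ c₁} {p₂ : G.Walk c₂ c₂}
    (h₁ : p₁.IsCycle) (h₂ : p₂.IsCycle) (hne : {e | e ∈ p₁.edges} ≠ {e | e ∈ p₂.edges})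
    (e : Sym2 V) : ∃ (z : V) (c : (G.deleteEdges {e}).Walk z z), c.IsCycle := by
  by_cases he₁ : e ∈ p₁.edges; swap
  · exact ⟨c₁, p₁.toDeleteEdge e he₁, h₁.toDeleteEdges _ _ _⟩
  by_cases he₂ : e ∈ p₂.edges; swap
  · exact ⟨c₂, p₂.toDeleteEdge e he₂, h₂.toDeleteEdges _ _ _⟩
  obtain ⟨α, β⟩ := e
  obtain ⟨q₁, hq₁, hn₁, hE₁⟩ := h₁.exists_isPath_of_mem_edges he₁
  obtain ⟨q₂, hq₂, hn₂, hE₂⟩ := h₂.exists_isPath_of_mem_edges he₂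
  by_cases hq : q₁.toDeleteEdge _ hn₁ = q₂.toDeleteEdge _ hn₂
  · have hq' := congrArg Walk.edges hq
    simp only [Walk.edges_transfer] at hq'
    exact absurd (Set.ext fun f => by simp [hE₁, hE₂, hq']) hne
  · obtain ⟨u, _, _, _, -, -, hc⟩ :=
      (hq₁.toDeleteEdges _ _ _).exists_isCycle_of_ne (hq₂.toDeleteEdges _ _ _) hq
    exact ⟨u, _, hc⟩

theorem reachable_deleteEdges_of_reachable {α β u v : V}
    (hαβ : (G.deleteEdges {s(α, β)}).Reachable α β) (h : G.Reachable u v) :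
    (G.deleteEdges {s(α, β)}).Reachable u v := by
  obtain ⟨p⟩ := h
  induction p with
  | nil => rfl
  | @cons a b _ hab _ ih =>
    refine Reachable.trans ?_ ih
    by_cases he : s(a, b) = s(α, β)
    · rcases Sym2.eq_iff.1 he with ⟨rfl, rfl⟩ | ⟨rfl, rfl⟩
      exacts [hαβ, hαβ.symm]
    · exact (deleteEdges_adj.2 ⟨hab, he⟩).reachable

theorem mem_of_reachable_of_forall_adj {S : Set V} (hS : ∀ u ∈ S, ∀ z, G.Adj u z → z ∈ S)
    {u v : V} (hu : u ∈ S) (h : G.Reachable u v) : v ∈ S := by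
  by_contra hv
  obtain ⟨p⟩ := h
  obtain ⟨d, -, hd, hd'⟩ := p.exists_boundary_dart S hu hv
  exact hd' (hS _ hd _ d.adj)

theorem IsNClique.exists_isCycle {T : Finset V} (hT : G.IsNClique 3 T) :
    ∃ (a : V) (c : G.Walk a a), c.IsCycle ∧ ∀ u, u ∈ c.support ↔ u ∈ T := by
  classical
  obtain ⟨a, b, d, hab, had, hbd, rfl⟩ := is3Clique_iff.1 hT
  refine ⟨a, .cons hab (.cons hbd (.cons had.symm .nil)), ?_, fun u => by simp; tauto⟩
  simp [Walk.cons_isCycle_iff, hab.ne, had.ne, hbd.ne, hab.ne.symm, had.ne.symm]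

end SimpleGraph

section CutsToStar

variable {H : SimpleGraph V}

theorem CutsToStar.exists_mem_edges {w x : V} (hw : CutsToStar H w) {c : H.Walk x x}
    (hc : c.IsCycle) (hwc : w ∈ c.support) :
    ∃ f ∈ c.edges, ∀ u ∈ c.support, u ≠ w →
      ((H.deleteEdges {f}).neighborSet u).Subsingleton := by
  classical
  obtain ⟨f, -, hstar⟩ := hw
  -- Otherwise the whole cycle survives the cut.
  have hf : f ∈ c.edges := by
    by_contra hf
    have hK {a b} (h : s(a, b) ∈ c.edges) : (H.deleteEdges {f}).Adj a b :=
      deleteEdges_adj.2 ⟨c.adj_of_mem_edges h, fun h' => hf (h' ▸ h)⟩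
    obtain ⟨a, -, -, ha, -⟩ := hc.exists_ne_mem_edges hwc
    obtain ⟨b, b', hbb', hb, hb'⟩ := hc.exists_ne_mem_edges (c.snd_mem_support_of_mem_edges ha)
    exact hbb' (hstar a (hK ha).ne.symm (hK ha).reachable (hK hb) (hK hb'))
  refine ⟨f, hf, fun u hu huw => hstar u huw ?_⟩
  induction f using Sym2.ind with | h α β => ?_
  exact reachable_deleteEdges_of_reachable
    (adj_and_reachable_delete_edges_iff_exists_cycle.2 ⟨_, c, hc, hf⟩).2
    ((c.takeUntil w hwc).reachable.symm.trans (c.takeUntil u hu).reachable)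

theorem CutsToStar.exists_isNClique {w x : V} (hw : CutsToStar H w) {c : H.Walk x x}
    (hc : c.IsCycle) (hwc : w ∈ c.support) :
    ∃ T : Finset V, H.IsNClique 3 T ∧ (∀ u, u ∈ c.support ↔ u ∈ T) ∧
      ∀ u ∈ T, u ≠ w → ∀ z, H.Adj u z → z ∈ T := by
  classical
  obtain ⟨f, hf, hstar⟩ := hw.exists_mem_edges hc hwc
  induction f using Sym2.ind with | h α β => ?_
  -- A cycle vertex off `s(α, β)` keeps both of its cycle edges after the cut.
  have hsub : ∀ u ∈ c.support, u = w ∨ u = α ∨ u = β := by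
    intro u hu
    by_contra! h
    obtain ⟨a, b, hab, ha, hb⟩ := hc.exists_ne_mem_edges hu
    have hK {a} (ha : s(u, a) ∈ c.edges) : (H.deleteEdges {s(α, β)}).Adj u a :=
      deleteEdges_adj.2 ⟨c.adj_of_mem_edges ha, fun h' => by
        rcases Sym2.eq_iff.1 h' with ⟨h', -⟩ | ⟨h', -⟩
        exacts [h.2.1 h', h.2.2 h']⟩
    exact hab (hstar u hu h.1 (hK ha) (hK hb))
  have hwα : H.Adj w α ∧ H.Adj w β := by
    obtain ⟨a, b, hab, ha, hb⟩ := hc.exists_ne_mem_edges hwc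
    have := hsub a (c.snd_mem_support_of_mem_edges ha)
    have := hsub b (c.snd_mem_support_of_mem_edges hb)
    have := c.adj_of_mem_edges ha
    have := c.adj_of_mem_edges hb
    grind [SimpleGraph.Adj.ne]
  have hnbr : ∀ u u', s(u, u') = s(α, β) → H.Adj w u → H.Adj w u' →
      ∀ z, H.Adj u z → z = w ∨ z = u' := by
    intro u u' huu' hwu hwu' z hz
    by_cases hzf : s(u, z) = s(u, u')
    · exact .inr (Sym2.congr_right.1 hzf)
    have hu : u ∈ c.support := by
      rw [← huu'] at hf
      exact c.fst_mem_support_of_mem_edges hf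
    have hK {a} (ha : H.Adj u a) (hne : s(u, a) ≠ s(u, u')) : (H.deleteEdges {s(α, β)}).Adj u a :=
      deleteEdges_adj.2 ⟨ha, fun h => hne ((Set.mem_singleton_iff.1 h).trans huu'.symm)⟩
    exact .inl (hstar u hu hwu.ne.symm (hK hz hzf)
      (hK hwu.symm fun h => hwu'.ne (Sym2.congr_right.1 h)))
  refine ⟨{w, α, β}, is3Clique_triple_iff.2 ⟨hwα.1, hwα.2, c.adj_of_mem_edges hf⟩,
    fun u => ⟨fun hu => by simpa using hsub u hu, fun hu => ?_⟩, ?_⟩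
  · simp only [Finset.mem_insert, Finset.mem_singleton] at hu
    rcases hu with rfl | rfl | rfl
    exacts [hwc, c.fst_mem_support_of_mem_edges hf, c.snd_mem_support_of_mem_edges hf]
  · intro u hu huw z hz
    simp only [Finset.mem_insert, Finset.mem_singleton] at hu ⊢
    rcases hu with rfl | rfl | rfl
    · exact absurd rfl huw
    · rcases hnbr u β rfl hwα.1 hwα.2 z hz with h | h <;> simp [h]
    · rcases hnbr u α Sym2.eq_swap hwα.2 hwα.1 z hz with h | h <;> simp [h]

theorem exists_isNClique_of_forall_cutsToStar {v x : V}
    (hstar : ∀ w, w ≠ v → H.Reachable v w → CutsToStar H w) {c : H.Walk x x}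
    (hc : c.IsCycle) (hvx : H.Reachable v x) :
    ∃ T : Finset V, H.IsNClique 3 T ∧ v ∈ T ∧ ∀ u ∈ T, ∀ z, H.Adj u z → z ∈ T := by
  classical
  have hreach : ∀ w ∈ c.support, H.Reachable v w := fun w hw =>
    hvx.trans (c.takeUntil w hw).reachable
  obtain ⟨w, hwc, hwv⟩ : ∃ w ∈ c.support, w ≠ v := by
    obtain ⟨a, b, hab, ha, hb⟩ := hc.exists_ne_mem_edges c.start_mem_support
    by_cases hav : a = v
    · exact ⟨b, c.snd_mem_support_of_mem_edges hb, fun h => hab (hav.trans h.symm)⟩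
    · exact ⟨a, c.snd_mem_support_of_mem_edges ha, hav⟩
  -- `exists_isNClique` at two vertices of the triangle other than `v` shows that it is closed.
  obtain ⟨T, hT, hTc, hTw⟩ := (hstar w hwv (hreach w hwc)).exists_isNClique hc hwc
  obtain ⟨w', hw'T, hw'⟩ := Finset.exists_mem_notMem_of_card_lt_card
    ((Finset.card_le_two (a := w) (b := v)).trans_lt (by rw [hT.card_eq]; omega))
  simp only [Finset.mem_insert, Finset.mem_singleton, not_or] at hw'
  have hw'c := (hTc w').2 hw'T
  obtain ⟨T', -, hT'c, hT'w'⟩ := (hstar w' hw'.2 (hreach w' hw'c)).exists_isNClique hc hw'c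
  have hT' : T' = T := Finset.ext fun u => (hT'c u).symm.trans (hTc u)
  subst hT'
  have hclosed : ∀ u ∈ T', ∀ z, H.Adj u z → z ∈ T' := fun u hu => by
    by_cases huw : u = w
    · exact hT'w' u hu (huw ▸ Ne.symm hw'.1)
    · exact hTw u hu huw
  exact ⟨T', hT, mem_of_reachable_of_forall_adj (S := (T' : Set V)) hclosed
    ((hTc w).1 hwc) (hreach w hwc).symm, hclosed⟩

end CutsToStar

structure IsPendantTriangle (G : SimpleGraph V) (T : Finset V) (x y : V) : Prop where
  isNClique : G.IsNClique 3 T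
  mem : x ∈ T
  notMem : y ∉ T
  adj : G.Adj x y
  eq_of_adj : ∀ u ∈ T, ∀ z ∉ T, G.Adj u z → u = x ∧ z = y

namespace IsPendantTriangle

variable {G : SimpleGraph V} {T : Finset V} {x y : V}

theorem of_deleteEdges (hT : (G.deleteEdges {s(x, y)}).IsNClique 3 T)
    (hclosed : ∀ u ∈ T, ∀ z, (G.deleteEdges {s(x, y)}).Adj u z → z ∈ T) (hx : x ∈ T)
    (hy : y ∉ T) (hxy : G.Adj x y) : IsPendantTriangle G T x y where
  isNClique := hT.mono (deleteEdges_le _)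
  mem := hx
  notMem := hy
  adj := hxy
  eq_of_adj u hu z hz huz := by
    by_contra h
    refine hz (hclosed u hu z (deleteEdges_adj.2 ⟨huz, fun he => h ?_⟩))
    rcases Sym2.eq_iff.1 he with ⟨rfl, rfl⟩ | ⟨rfl, rfl⟩
    exacts [⟨rfl, rfl⟩, absurd hu hy]

theorem mem_or_eq_of_adj (h : IsPendantTriangle G T x y) {u z : V} (hu : u ∈ T)
    (huz : G.Adj u z) : z ∈ T ∨ z = y :=
  or_iff_not_imp_left.2 fun hz => (h.eq_of_adj u hu z hz huz).2

theorem exists_mem_ne (h : IsPendantTriangle G T x y) : ∃ s ∈ T, s ≠ x :=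
  Finset.exists_mem_ne (by rw [h.isNClique.card_eq]; omega) x

theorem exists_eq_insert [DecidableEq V] (h : IsPendantTriangle G T x y) :
    ∃ s t, x ≠ s ∧ x ≠ t ∧ s ≠ t ∧ T = {x, s, t} := by
  obtain ⟨s, t, hst, hT⟩ := Finset.card_eq_two.1 (by
    rw [Finset.card_erase_of_mem h.mem, h.isNClique.card_eq] : (T.erase x).card = 2)
  have hx : x ∉ T.erase x := Finset.notMem_erase x T
  rw [hT] at hx
  simp only [Finset.mem_insert, Finset.mem_singleton, not_or] at hx
  exact ⟨s, t, hx.1, hx.2, hst, by rw [← hT, Finset.insert_erase h.mem]⟩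

theorem deleteEdges (h : IsPendantTriangle G T x y) {e : Sym2 V} (he : ∀ u ∈ T, u ∉ e) :
    IsPendantTriangle (G.deleteEdges {e}) T x y := by
  have hne {a b : V} (ha : a ∈ T) : s(a, b) ∉ ({e} : Set (Sym2 V)) := fun hab =>
    he a ha (Set.mem_singleton_iff.1 hab ▸ Sym2.mem_mk_left a b)
  exact {
    isNClique := ⟨fun a ha b hb hab => deleteEdges_adj.2 ⟨h.isNClique.isClique ha hb hab, hne ha⟩,
      h.isNClique.card_eq⟩
    mem := h.mem
    notMem := h.notMem
    adj := deleteEdges_adj.2 ⟨h.adj, hne h.mem⟩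
    eq_of_adj := fun u hu z hz huz => h.eq_of_adj u hu z hz (deleteEdges_adj.1 huz).1 }

theorem not_cutsToStar (h : IsPendantTriangle G T x y) {u : V} (hu : u ∈ T) (hux : u ≠ x) :
    ¬ CutsToStar G u := by
  intro hstar
  obtain ⟨a, c, hc, hcT⟩ := h.isNClique.exists_isCycle
  obtain ⟨T', -, hT'c, hclosed⟩ := hstar.exists_isNClique hc ((hcT u).2 hu)
  have hT' : T' = T := Finset.ext fun v => (hT'c v).symm.trans (hcT v)
  subst hT'
  exact h.notMem (hclosed x h.mem hux.symm y h.adj)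

theorem reachable_deleteEdges (h : IsPendantTriangle G T x y) {e : Sym2 V}
    (he : ∃ u ∈ T, u ∈ e) {z w : V} (p : G.Walk z w) (hz : z ∉ T) (hw : w ∈ T) :
    (G.deleteEdges {e}).Reachable z y := by
  induction p with
  | nil => exact absurd hw hz
  | @cons a b _ hab _ ih =>
    by_cases hb : b ∈ T
    · obtain ⟨-, rfl⟩ := h.eq_of_adj b hb a hz hab.symm
      rfl
    · refine (deleteEdges_adj.2 ⟨hab, fun hab' => ?_⟩).reachable.trans (ih hb hw)
      obtain ⟨u, hu, hue⟩ := he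
      rw [← Set.mem_singleton_iff.1 hab', Sym2.mem_iff] at hue
      rcases hue with rfl | rfl
      exacts [hz hu, hb hu]

end IsPendantTriangle

theorem exists_isPendantTriangle {G : SimpleGraph V} (hG : G.Connected)
    (hcap : ∀ v, CapturedIn G v 3)
    (hcyc : ∀ e, ∃ (z : V) (c : (G.deleteEdges {e}).Walk z z), c.IsCycle)
    {x v : V} {c : G.Walk x x} (hc : c.IsCycle) (hv : v ∈ c.support) :
    ∃ T y z, IsPendantTriangle G T y z ∧ v ∈ T := by
  classical
  obtain ⟨a, -, -, ha, -⟩ := hc.exists_ne_mem_edges hv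
  obtain ⟨e, he, hstar⟩ := (hcap v).exists_cutsToStar (c.adj_of_mem_edges ha)
  induction e using Sym2.ind with | h p q => ?_
  have hcyc' : ∃ (z : V) (c' : (G.deleteEdges {s(p, q)}).Walk z z), c'.IsCycle ∧
      (G.deleteEdges {s(p, q)}).Reachable v z := by
    by_cases hec : s(p, q) ∈ c.edges
    · obtain ⟨z, c', hc'⟩ := hcyc s(p, q)
      exact ⟨z, c', hc', (hG.connected_delete_edge_of_not_isBridge
        fun hb => hb.notMem_edges_of_isCycle hc hec).preconnected v z⟩
    · have hv' : v ∈ (c.toDeleteEdge _ hec).support := by simpa using hv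
      exact ⟨x, c.toDeleteEdge _ hec, hc.toDeleteEdges _ _ _,
        ((c.toDeleteEdge _ hec).takeUntil v hv').reachable.symm⟩
  obtain ⟨z, c', hc', hvz⟩ := hcyc'
  obtain ⟨T, hT, hvT, hclosed⟩ := exists_isNClique_of_forall_cutsToStar hstar hc' hvz
  -- `T` is closed in `G - s(p, q)` but not in the connected `G`, so the cut edge leaves `T`.
  refine ⟨T, ?_⟩
  by_cases hp : p ∈ T <;> by_cases hq : q ∈ T
  · exact absurd (hT.isClique hp hq (G.ne_of_adj he)) (by simp)
  · exact ⟨p, q, .of_deleteEdges hT hclosed hp hq he, hvT⟩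
  · rw [Sym2.eq_swap] at hT hclosed
    exact ⟨q, p, .of_deleteEdges hT hclosed hq hp he.symm, hvT⟩
  · refine absurd (mem_of_reachable_of_forall_adj (S := (T : Set V)) (fun u hu w huw => ?_) hvT
      (hG.preconnected v p)) hp
    refine hclosed u hu w (deleteEdges_adj.2 ⟨huw, fun h => ?_⟩)
    rcases Sym2.eq_iff.1 (Set.mem_singleton_iff.1 h) with ⟨rfl, -⟩ | ⟨rfl, -⟩
    exacts [hp hu, hq hu]

namespace IsPendantTriangle

variable {G : SimpleGraph V} {T : Finset V} {x y : V}

theorem exists_isCycle_notMem (h : IsPendantTriangle G T x y)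
    (hcyc : ∀ e, ∃ (z : V) (c : (G.deleteEdges {e}).Walk z z), c.IsCycle) :
    ∃ (z : V) (c : G.Walk z z), c.IsCycle ∧ z ∉ T := by
  classical
  obtain ⟨s, t, hxs, hxt, hst, rfl⟩ := h.exists_eq_insert
  obtain ⟨z, c, hc⟩ := hcyc s(s, t)
  have hoff {u b : V} (hu : ∀ a, s(u, a) ∈ c.edges → a = b) : u ∉ c.support := fun huc => by
    obtain ⟨a, a', haa', ha, ha'⟩ := hc.exists_ne_mem_edges huc
    exact haa' ((hu a ha).trans (hu a' ha').symm)
  have hadj {u a : V} (ha : s(u, a) ∈ c.edges) : G.Adj u a ∧ s(u, a) ≠ s(s, t) := by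
    simpa using c.adj_of_mem_edges ha
  -- Once `s(s, t)` is cut, `s` and `t` are leaves, and then `y` is the only cycle neighbour
  -- left to `x`.
  have hleaf {u v : V} (huv : s(u, v) = s(s, t)) : u ∉ c.support := hoff (b := x) fun a ha => by
    have hu : u ∈ ({x, s, t} : Finset V) ∧ u ≠ x := by
      rcases Sym2.eq_iff.1 huv with ⟨rfl, rfl⟩ | ⟨rfl, rfl⟩ <;> simp [Ne.symm hxs, Ne.symm hxt]
    obtain ⟨hua, hne⟩ := hadj ha
    rcases h.mem_or_eq_of_adj hu.1 hua with haT | rfl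
    · simp only [Finset.mem_insert, Finset.mem_singleton] at haT
      rw [← huv] at hne
      grind [SimpleGraph.Adj.ne]
    · exact absurd (h.eq_of_adj u hu.1 a h.notMem hua).1 hu.2
  have hsc : s ∉ c.support := hleaf rfl
  have htc : t ∉ c.support := hleaf Sym2.eq_swap
  have hxc : x ∉ c.support := hoff (b := y) fun a ha => by
    have hac := c.snd_mem_support_of_mem_edges ha
    refine (h.eq_of_adj x h.mem a ?_ (hadj ha).1).2
    simp only [Finset.mem_insert, Finset.mem_singleton, not_or]
    exact ⟨(hadj ha).1.ne.symm, fun h => hsc (h ▸ hac), fun h => htc (h ▸ hac)⟩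
  refine ⟨z, c.mapLe (deleteEdges_le _), hc.mapLe _, ?_⟩
  simp only [Finset.mem_insert, Finset.mem_singleton, not_or]
  exact ⟨fun h => hxc (h ▸ c.start_mem_support), fun h => hsc (h ▸ c.start_mem_support),
    fun h => htc (h ▸ c.start_mem_support)⟩

theorem disjoint_of_not_subset (h : IsPendantTriangle G T x y) {K : Finset V}
    (hK : G.IsNClique 3 K) (hKT : ¬ K ⊆ T) : Disjoint K T := by
  classical
  rw [Finset.disjoint_left]
  intro u huK huT
  obtain ⟨a, haK, haT⟩ := Finset.not_subset.1 hKT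
  have hua : u ≠ a := fun h => haT (h ▸ huT)
  obtain ⟨rfl, rfl⟩ := h.eq_of_adj u huT a haT (hK.isClique huK haK hua)
  -- The third vertex of `K` would be adjacent to both ends of the bridge.
  obtain ⟨b, hbK, hb⟩ := Finset.exists_mem_notMem_of_card_lt_card
    ((Finset.card_le_two (a := u) (b := a)).trans_lt (by rw [hK.card_eq]; omega))
  simp only [Finset.mem_insert, Finset.mem_singleton, not_or] at hb
  rcases h.mem_or_eq_of_adj huT (hK.isClique huK hbK (Ne.symm hb.1)) with hbT | rfl
  · exact hb.1 (h.eq_of_adj b hbT a haT (hK.isClique hbK haK hb.2)).1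
  · exact hb.2 rfl

theorem mem_of_disjoint (hG : G.Connected) (h₁ : IsPendantTriangle G T x y)
    (hcap : CapturedIn G y 3) {T' : Finset V} {x' y' : V} (h₂ : IsPendantTriangle G T' x' y')
    (hdisj : Disjoint T T') : y' ∈ T := by
  by_contra hy'
  have hy : y ∉ T' := fun hy => by
    obtain ⟨-, rfl⟩ :=
      h₂.eq_of_adj y hy x (Finset.disjoint_left.1 hdisj h₁.mem) h₁.adj.symm
    exact hy' h₁.mem
  obtain ⟨e, he, hstar⟩ := hcap.exists_cutsToStar h₁.adj.symm
  -- Whatever the first cut, the cat runs from `y` into an intact pendant triangle, to a vertex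
  -- other than its attachment vertex, and from there it survives two more cuts.
  suffices ∃ S a b, IsPendantTriangle (G.deleteEdges {e}) S a b ∧ y ∉ S ∧
      (G.deleteEdges {e}).Reachable y a by
    obtain ⟨S, a, b, hS, hyS, hya⟩ := this
    obtain ⟨s, hs, hsa⟩ := hS.exists_mem_ne
    exact hS.not_cutsToStar hs hsa (hstar s (fun h => hyS (h ▸ hs))
      (hya.trans (hS.isNClique.isClique hS.mem hs hsa.symm).reachable))
  by_cases heT : ∃ u ∈ T, u ∈ e
  · have heT' : ∀ u ∈ T', u ∉ e := fun u hu hue => by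
      obtain ⟨v, hv, hve⟩ := heT
      obtain ⟨w, rfl⟩ := Sym2.mem_iff_exists.1 hve
      rcases Sym2.mem_iff.1 hue with rfl | rfl
      · exact Finset.disjoint_left.1 hdisj hv hu
      · rcases h₁.mem_or_eq_of_adj hv he with hu' | rfl
        exacts [Finset.disjoint_left.1 hdisj hu' hu, hy hu]
    have h₂' := h₂.deleteEdges heT'
    obtain ⟨p⟩ := hG.preconnected y' x
    exact ⟨T', x', y', h₂', hy,
      (h₁.reachable_deleteEdges heT p hy' h₁.mem).symm.trans h₂'.adj.symm.reachable⟩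
  · push Not at heT
    have h₁' := h₁.deleteEdges heT
    exact ⟨T, x, y, h₁', h₁.notMem, h₁'.adj.symm.reachable⟩

theorem mem_or_mem (hG : G.Connected) {T' : Finset V} (h₁ : IsPendantTriangle G T x y)
    (h₂ : IsPendantTriangle G T' y x) (u : V) : u ∈ T ∨ u ∈ T' := by
  have hclosed : ∀ v ∈ (T ∪ T' : Set V), ∀ z, G.Adj v z → z ∈ (T ∪ T' : Set V) := by
    rintro v (hv | hv) z hvz
    · rcases h₁.mem_or_eq_of_adj hv hvz with hz | rfl
      exacts [.inl hz, .inr h₂.mem]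
    · rcases h₂.mem_or_eq_of_adj hv hvz with hz | rfl
      exacts [.inr hz, .inl h₁.mem]
  exact mem_of_reachable_of_forall_adj hclosed (.inl h₁.mem) (hG.preconnected x u)

theorem adj_iff {T' : Finset V} (h₁ : IsPendantTriangle G T x y)
    (h₂ : IsPendantTriangle G T' y x) (hcover : ∀ u, u ∈ T ∨ u ∈ T') {a b : V} :
    G.Adj a b ↔ a ≠ b ∧ ((a ∈ T ↔ b ∈ T) ∨ s(a, b) = s(x, y)) := by
  constructor
  · intro hab
    refine ⟨hab.ne, ?_⟩
    by_cases ha : a ∈ T <;> by_cases hb : b ∈ T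
    · simp [ha, hb]
    · obtain ⟨rfl, rfl⟩ := h₁.eq_of_adj a ha b hb hab
      simp
    · obtain ⟨rfl, rfl⟩ := h₁.eq_of_adj b hb a ha hab.symm
      simp [Sym2.eq_swap]
    · simp [ha, hb]
  · rintro ⟨hab, hT | he⟩
    · by_cases ha : a ∈ T
      · exact h₁.isNClique.isClique ha (hT.1 ha) hab
      · exact h₂.isNClique.isClique ((hcover a).resolve_left ha)
          ((hcover b).resolve_left (mt hT.2 ha)) hab
    · rcases Sym2.eq_iff.1 he with ⟨rfl, rfl⟩ | ⟨rfl, rfl⟩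
      exacts [h₁.adj, h₁.adj.symm]

end IsPendantTriangle

theorem twoTrianglesBridge_adj (i j : Fin 6) :
    twoTrianglesBridge.Adj i j ↔ i ≠ j ∧ ((i < 3 ↔ j < 3) ∨ s(i, j) = s(2, 3)) := by
  unfold twoTrianglesBridge
  simp only [fromEdgeSet_adj, Set.mem_insert_iff, Set.mem_singleton_iff]
  revert i j
  decide

theorem IsPendantTriangle.nonempty_iso_twoTrianglesBridge {G : SimpleGraph V} (hG : G.Connected)
    {T T' : Finset V} {x y : V} (h₁ : IsPendantTriangle G T x y)
    (h₂ : IsPendantTriangle G T' y x) (hdisj : Disjoint T T') :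
    Nonempty (G ≃g twoTrianglesBridge) := by
  classical
  have hcover := h₁.mem_or_mem hG h₂
  obtain ⟨s, t, hxs, hxt, hst, rfl⟩ := h₁.exists_eq_insert
  obtain ⟨s', t', hys', hyt', hst', rfl⟩ := h₂.exists_eq_insert
  simp only [Finset.disjoint_insert_left, Finset.disjoint_insert_right,
    Finset.disjoint_singleton_left, Finset.mem_insert, Finset.mem_singleton, not_or] at hdisj
  let φ : Fin 6 → V := ![s, t, x, y, s', t']
  have hφ : Function.Bijective φ := by
    constructor
    · intro i j hij
      fin_cases i <;> fin_cases j <;> simp_all [φ, eq_comm]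
    · intro u
      rcases hcover u with hu | hu <;> simp only [Finset.mem_insert, Finset.mem_singleton] at hu
      · rcases hu with rfl | rfl | rfl
        exacts [⟨2, rfl⟩, ⟨0, rfl⟩, ⟨1, rfl⟩]
      · rcases hu with rfl | rfl | rfl
        exacts [⟨3, rfl⟩, ⟨4, rfl⟩, ⟨5, rfl⟩]
  have hφT (i : Fin 6) : φ i ∈ ({x, s, t} : Finset V) ↔ i < 3 := by
    fin_cases i <;> simp_all [φ, eq_comm]
  refine ⟨(⟨Equiv.ofBijective φ hφ, fun {i j} => ?_⟩ : twoTrianglesBridge ≃g G).symm⟩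
  change G.Adj (φ i) (φ j) ↔ _
  rw [h₁.adj_iff h₂ hcover, twoTrianglesBridge_adj, hφT, hφT, hφ.1.ne_iff,
    show s(x, y) = Sym2.map φ s(2, 3) from rfl, ← Sym2.map_mk, (Sym2.map.injective hφ.1).eq_iff]

/-- a connected graph with two distinct cycles and cat number 3
is two triangles joined by a bridge (hence has 6 vertices). -/
theorem two_cycles_catNum_three {V : Type u} (G : SimpleGraph V) (hc : G.Connected)
    (h : ∃ (c₁ c₂ : V) (p₁ : G.Walk c₁ c₁) (p₂ : G.Walk c₂ c₂),
      p₁.IsCycle ∧ p₂.IsCycle ∧ {e | e ∈ p₁.edges} ≠ {e | e ∈ p₂.edges})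
    (h3 : catNum G = 3) :
    Nonempty (G ≃g twoTrianglesBridge) := by
  obtain ⟨c₁, c₂, p₁, p₂, h₁, h₂, hne⟩ := h
  have hcap : ∀ v, CapturedIn G v 3 := CapturedIn.of_catNum_le h3.le
  have hcyc := exists_isCycle_deleteEdges h₁ h₂ hne
  obtain ⟨T, x, y, hT, -⟩ := exists_isPendantTriangle hc hcap hcyc h₁ p₁.start_mem_support
  obtain ⟨z, c, hcz, hzT⟩ := hT.exists_isCycle_notMem hcyc
  obtain ⟨T', x', y', hT', hzT'⟩ := exists_isPendantTriangle hc hcap hcyc hcz c.start_mem_support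
  have hdisj : Disjoint T T' := (hT.disjoint_of_not_subset hT'.isNClique fun h => hzT (h hzT')).symm
  have hy' : y' ∈ T := hT.mem_of_disjoint hc (hcap y) hT' hdisj
  obtain ⟨rfl, rfl⟩ := hT.eq_of_adj y' hy' x' (Finset.disjoint_right.1 hdisj hT'.mem) hT'.adj.symm
  exact hT.nonempty_iso_twoTrianglesBridge hc hT' hdisj
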